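/- arXiv:2208.07808 — 2 statements merged into one kernel-verified Lean document; each statement's English description precedes it below -/
import Mathlib

section
/- Let R be a commutative artinian ring, let (A, E, s) be an artin R-linear extriangulated category, and let Φ = {Φ_1, …, Φ_n} be an E-stratifying system. Then for each object X of A there exists an extriangle A → B → X ⇢η with A ∈ F(Φ) and B ∈ P(Φ), where P(Φ) := {Z ∈ A : E(Z, Y) = 0 for all Y ∈ F(Φ)}. In particular, the extriangulated category (F(Φ), E|F(Φ), s|F(Φ)) has enough E|F(Φ)-projectives. -/
/-!
Common axiomatic framework: extriangulated categories in the sense of Nakaoka–Palu,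
formalised as a biadditive functor `E` together with a realisation predicate
`IsExtriangle` subject to the axioms (ET1)–(ET4), (ET3)ᵒᵖ, (ET4)ᵒᵖ.
-/

open CategoryTheory CategoryTheory.Limits ZeroObject

attribute [local instance] CategoryTheory.Limits.hasBinaryBiproducts_of_finite_biproducts

universe v u

namespace ExtriPaper

/-- The data underlying an extriangulated category: a biadditive functor `E` and,
for each extension `δ ∈ E(X, A)`, the predicate picking out the pairs of composable
morphisms `A ⟶ B ⟶ X` belonging to the equivalence class `s(δ)`. -/
structure PreExt (C : Type u) [Category.{v} C] [Preadditive C] where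
  E : Cᵒᵖ ⥤ C ⥤ AddCommGrpCat.{v}
  IsExtriangle : ∀ {A B X : C}, (A ⟶ B) → (B ⟶ X) → ↥((E.obj (Opposite.op X)).obj A) → Prop

namespace PreExt

variable {C : Type u} [Category.{v} C] [Preadditive C]
variable (S : PreExt C)

/-- The group `E(X, A)` of extensions of `X` by `A`. -/
abbrev Ext (X A : C) : Type v := ↥((S.E.obj (Opposite.op X)).obj A)

/-- Pushforward `a_* δ` of an extension along `a : A ⟶ A'`. -/
def push {X A A' : C} (a : A ⟶ A') (δ : S.Ext X A) : S.Ext X A' :=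
  (S.E.obj (Opposite.op X)).map a δ

/-- Pullback `c^* δ` of an extension along `c : X' ⟶ X`. -/
def pull {X' X A : C} (c : X' ⟶ X) (δ : S.Ext X A) : S.Ext X' A :=
  (S.E.map c.op).app A δ

section Axioms

variable [HasZeroObject C] [HasFiniteBiproducts C]

/-- The direct sum `δ ⊕ δ'` of two extensions. -/
noncomputable def sumExt {X X' A A' : C} (δ : S.Ext X A) (δ' : S.Ext X' A') :
    S.Ext (X ⊞ X') (A ⊞ A') :=
  S.push biprod.inl (S.pull biprod.fst δ) + S.push biprod.inr (S.pull biprod.snd δ')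

/-- The axioms of an extriangulated category (Nakaoka–Palu): `E` is biadditive,
`s` (encoded by `IsExtriangle`) is an additive realisation defined on equivalence
classes, and the axioms (ET3), (ET3)ᵒᵖ, (ET4), (ET4)ᵒᵖ hold. -/
structure IsET : Prop where
  /-- Biadditivity of `E` in the covariant variable. -/
  push_add : ∀ {X A A' : C} (a b : A ⟶ A') (δ : S.Ext X A),
      S.push (a + b) δ = S.push a δ + S.push b δ
  /-- Biadditivity of `E` in the contravariant variable. -/
  pull_add : ∀ {X X' A : C} (c d : X' ⟶ X) (δ : S.Ext X A),
      S.pull (c + d) δ = S.pull c δ + S.pull d δ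
  /-- Every extension is realised by a pair of composable morphisms. -/
  realize_exists : ∀ {A X : C} (δ : S.Ext X A),
      ∃ (B : C) (f : A ⟶ B) (g : B ⟶ X), S.IsExtriangle f g δ
  /-- The realisation is closed under equivalence of pairs of composable morphisms. -/
  realize_iso : ∀ {A B B' X : C} {f : A ⟶ B} {g : B ⟶ X} {δ : S.Ext X A} (e : B ≅ B'),
      S.IsExtriangle f g δ → S.IsExtriangle (f ≫ e.hom) (e.inv ≫ g) δ
  /-- Any two realisations of the same extension are equivalent. -/
  realize_unique : ∀ {A B B' X : C} {f : A ⟶ B} {g : B ⟶ X} {f' : A ⟶ B'} {g' : B' ⟶ X}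
      {δ : S.Ext X A}, S.IsExtriangle f g δ → S.IsExtriangle f' g' δ →
      ∃ e : B ≅ B', f ≫ e.hom = f' ∧ e.hom ≫ g' = g
  /-- Morphisms of extensions lift to morphisms of extriangles. -/
  realize_map : ∀ {A B X A' B' X' : C} {f : A ⟶ B} {g : B ⟶ X} {δ : S.Ext X A}
      {f' : A' ⟶ B'} {g' : B' ⟶ X'} {δ' : S.Ext X' A'},
      S.IsExtriangle f g δ → S.IsExtriangle f' g' δ' →
      ∀ (a : A ⟶ A') (c : X ⟶ X'), S.push a δ = S.pull c δ' →
      ∃ b : B ⟶ B', f ≫ b = a ≫ f' ∧ b ≫ g' = g ≫ c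
  /-- The zero extension is realised by the split pair. -/
  realize_zero : ∀ (A X : C),
      S.IsExtriangle (biprod.inl : A ⟶ A ⊞ X) (biprod.snd : A ⊞ X ⟶ X) (0 : S.Ext X A)
  /-- The realisation is additive. -/
  realize_sum : ∀ {A B X A' B' X' : C} {f : A ⟶ B} {g : B ⟶ X} {δ : S.Ext X A}
      {f' : A' ⟶ B'} {g' : B' ⟶ X'} {δ' : S.Ext X' A'},
      S.IsExtriangle f g δ → S.IsExtriangle f' g' δ' →
      S.IsExtriangle (biprod.map f f') (biprod.map g g') (S.sumExt δ δ')
  /-- Axiom (ET3). -/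
  et3 : ∀ {A B X A' B' X' : C} {f : A ⟶ B} {g : B ⟶ X} {δ : S.Ext X A}
      {f' : A' ⟶ B'} {g' : B' ⟶ X'} {δ' : S.Ext X' A'},
      S.IsExtriangle f g δ → S.IsExtriangle f' g' δ' →
      ∀ (a : A ⟶ A') (b : B ⟶ B'), f ≫ b = a ≫ f' →
      ∃ c : X ⟶ X', g ≫ c = b ≫ g' ∧ S.push a δ = S.pull c δ'
  /-- Axiom (ET3)ᵒᵖ. -/
  et3op : ∀ {A B X A' B' X' : C} {f : A ⟶ B} {g : B ⟶ X} {δ : S.Ext X A}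
      {f' : A' ⟶ B'} {g' : B' ⟶ X'} {δ' : S.Ext X' A'},
      S.IsExtriangle f g δ → S.IsExtriangle f' g' δ' →
      ∀ (b : B ⟶ B') (c : X ⟶ X'), g ≫ c = b ≫ g' →
      ∃ a : A ⟶ A', f ≫ b = a ≫ f' ∧ S.push a δ = S.pull c δ'
  /-- Axiom (ET4). -/
  et4 : ∀ {A B D F G : C} {f : A ⟶ B} {f' : B ⟶ D} {δ : S.Ext D A}
      {g : B ⟶ G} {g' : G ⟶ F} {δ' : S.Ext F B},
      S.IsExtriangle f f' δ → S.IsExtriangle g g' δ' →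
      ∃ (E₀ : C) (h : G ⟶ E₀) (d : D ⟶ E₀) (e : E₀ ⟶ F) (δ'' : S.Ext E₀ A),
        S.IsExtriangle (f ≫ g) h δ'' ∧
        S.IsExtriangle d e (S.push f' δ') ∧
        S.pull d δ'' = δ ∧
        S.push f δ'' = S.pull e δ' ∧
        f' ≫ d = g ≫ h ∧ h ≫ e = g'
  /-- Axiom (ET4)ᵒᵖ. -/
  et4op : ∀ {D B A F G : C} {p : D ⟶ B} {f₁ : B ⟶ A} {δ₁ : S.Ext A D}
      {q : F ⟶ G} {g₁ : G ⟶ B} {δ₁' : S.Ext B F},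
      S.IsExtriangle p f₁ δ₁ → S.IsExtriangle q g₁ δ₁' →
      ∃ (E₀ : C) (h : E₀ ⟶ G) (d : E₀ ⟶ D) (e : F ⟶ E₀) (δ'' : S.Ext A E₀),
        S.IsExtriangle h (g₁ ≫ f₁) δ'' ∧
        S.IsExtriangle e d (S.pull p δ₁') ∧
        S.push d δ'' = δ₁ ∧
        S.pull f₁ δ'' = S.push e δ₁' ∧
        d ≫ p = h ≫ g₁ ∧ e ≫ h = q

end Axioms

/-- A morphism is an inflation if it occurs as the first morphism of an extriangle. -/
def IsInflation {A B : C} (f : A ⟶ B) : Prop :=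
  ∃ (X : C) (g : B ⟶ X) (δ : S.Ext X A), S.IsExtriangle f g δ

/-- A morphism is a deflation if it occurs as the second morphism of an extriangle. -/
def IsDeflation {B X : C} (g : B ⟶ X) : Prop :=
  ∃ (A : C) (f : A ⟶ B) (δ : S.Ext X A), S.IsExtriangle f g δ

/-- An isomorphism of extriangles: a triple of isomorphisms compatible with the
structure morphisms and identifying the two extensions. -/
def TriIso {A B X A' B' X' : C} (f : A ⟶ B) (g : B ⟶ X) (δ : S.Ext X A)
    (f' : A' ⟶ B') (g' : B' ⟶ X') (δ' : S.Ext X' A') : Prop :=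
  ∃ (iA : A ≅ A') (iB : B ≅ B') (iX : X ≅ X'),
    f ≫ iB.hom = iA.hom ≫ f' ∧ g ≫ iX.hom = iB.hom ≫ g' ∧
    S.push iA.hom δ = S.pull iX.hom δ'

/-- A chain of `t` composable extriangles: inflations `obj i ⟶ obj (i+1)` each fitting
in an extriangle with cone `factor i`.  This underlies filtrations, inflation series
and composition series alike. -/
structure FChain (t : ℕ) where
  obj : Fin (t + 1) → C
  factor : Fin t → C
  f : ∀ i : Fin t, obj i.castSucc ⟶ obj i.succ
  g : ∀ i : Fin t, obj i.succ ⟶ factor i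
  δ : ∀ i : Fin t, S.Ext (factor i) (obj i.castSucc)
  ext : ∀ i : Fin t, S.IsExtriangle (f i) (g i) (δ i)

/-- The composite `obj 0 ⟶ obj i` of the morphisms of a chain. -/
def FChain.comp {t : ℕ} (c : S.FChain t) : ∀ i : Fin (t + 1), c.obj 0 ⟶ c.obj i :=
  Fin.induction (𝟙 _) (fun i ih => ih ≫ c.f i)

/-- The subcategory `F(P)` of objects admitting a filtration with factors in `P`. -/
def Filt (P : Set C) : Set C :=
  {M | ∃ (t : ℕ) (c : S.FChain t), IsZero (c.obj 0) ∧ c.obj (Fin.last t) = M ∧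
      ∀ i, c.factor i ∈ P}

/-- An `(E, s)`-simple object: a non-zero object `M` such that in every extriangle
`A →a M → X ⇢` the inflation `a` is zero or an isomorphism. -/
def SSimple (M : C) : Prop :=
  ¬ IsZero M ∧ ∀ (A X : C) (a : A ⟶ M) (g : M ⟶ X) (δ : S.Ext X A),
    S.IsExtriangle a g δ → a = 0 ∨ IsIso a

/-- The zero objects of `C` are `(E, s)`-simple-like. -/
def ZeroSimpleLike : Prop :=
  ∀ (A Z X : C) (f : A ⟶ Z) (g : Z ⟶ X) (δ : S.Ext X A),
    IsZero Z → S.IsExtriangle f g δ → IsZero A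

/-- `c` is an `(E, s)`-composition series of `M`. -/
def IsCompSeries {t : ℕ} (c : S.FChain t) (M : C) : Prop :=
  IsZero (c.obj 0) ∧ c.obj (Fin.last t) = M ∧ ∀ i, S.SSimple (c.factor i)

/-- `(A, E, s)` is a length extriangulated category. -/
def LengthCat : Prop :=
  ∀ M : C, (∃ (t : ℕ) (c : S.FChain t), S.IsCompSeries c M) ∧
    ∃ N : ℕ, ∀ (t : ℕ) (c : S.FChain t), S.IsCompSeries c M → t ≤ N

/-- `(A, E, s)` is a Jordan–Hölder extriangulated category: any two composition series
of an object have the same length and, up to a permutation, isomorphic simple factors. -/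
def JordanHolder : Prop :=
  ∀ (M : C) (t t' : ℕ) (c : S.FChain t) (c' : S.FChain t'),
    S.IsCompSeries c M → S.IsCompSeries c' M →
    ∃ e : Fin t ≃ Fin t', ∀ i, Nonempty (c.factor i ≅ c'.factor (e i))

/-- `c` is an `(E, s)`-inflation series of `B`: a filtration of `B` with non-zero factors. -/
def IsInflSeries {t : ℕ} (c : S.FChain t) (B : C) : Prop :=
  IsZero (c.obj 0) ∧ c.obj (Fin.last t) = B ∧ ∀ i, ¬ IsZero (c.factor i)

/-- `X` and `Y` admit isomorphic `(E, s)`-inflation series. -/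
def HaveIsoInflSeries (X Y : C) : Prop :=
  ∃ (t : ℕ) (c d : S.FChain t), S.IsInflSeries c X ∧ S.IsInflSeries d Y ∧
    ∃ e : Equiv.Perm (Fin t), ∀ i, Nonempty (c.factor i ≅ d.factor (e i))

/-- Simplicity of `M` with respect to the extriangulated structure restricted to the
extension-closed subcategory `𝒮`: extriangles of the restricted structure are exactly
the ambient extriangles all of whose terms lie in `𝒮`. -/
def SimpleIn (𝒮 : Set C) (M : C) : Prop :=
  M ∈ 𝒮 ∧ ¬ IsZero M ∧ ∀ (A X : C) (a : A ⟶ M) (g : M ⟶ X) (δ : S.Ext X A),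
    A ∈ 𝒮 → X ∈ 𝒮 → S.IsExtriangle a g δ → a = 0 ∨ IsIso a

/-- `c` is a composition series of `M` in the extriangulated structure restricted to `𝒮`. -/
def IsCompSeriesIn (𝒮 : Set C) {t : ℕ} (c : S.FChain t) (M : C) : Prop :=
  IsZero (c.obj 0) ∧ c.obj (Fin.last t) = M ∧ (∀ i, c.obj i ∈ 𝒮) ∧
    ∀ i, S.SimpleIn 𝒮 (c.factor i)

section Star

variable [HasZeroObject C] [HasFiniteBiproducts C]

/-- The subcategory `P ∗ Q` of objects `Z` admitting an extriangle `X → Z → Y ⇢`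
with `X ∈ P` and `Y ∈ Q`. -/
def star (P Q : Set C) : Set C :=
  {Z | ∃ (X Y : C) (f : X ⟶ Z) (g : Z ⟶ Y) (δ : S.Ext Y X),
      X ∈ P ∧ Y ∈ Q ∧ S.IsExtriangle f g δ}

/-- Iterated `∗` of a list of subcategories (the empty `∗` being the zero objects). -/
def starMany : List (Set C) → Set C
  | [] => {Z | IsZero Z}
  | P :: l => S.star P (starMany l)

end Star

/-- The relative projectives `P(P) = {Z : E(Z, Y) = 0 for all Y ∈ F(P)}`. -/
def projSet (P : Set C) : Set C :=
  {Z | ∀ Y ∈ S.Filt P, ∀ δ : S.Ext Z Y, δ = 0}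

/-- `Hom(W, −)` is left exact on the extriangulated structure restricted to `𝒮`:
for every extriangle `A →a B → X ⇢` with all terms in `𝒮`, composition with `a`
is injective on morphisms from `W`. -/
def HomLeftExactOn (W : C) (𝒮 : Set C) : Prop :=
  ∀ (A B X : C) (a : A ⟶ B) (g : B ⟶ X) (δ : S.Ext X A),
    A ∈ 𝒮 → B ∈ 𝒮 → X ∈ 𝒮 → S.IsExtriangle a g δ →
    ∀ φ ψ : W ⟶ A, φ ≫ a = ψ ≫ a → φ = ψ

/-- The subset of the free abelian group on objects consisting of the defining
relations of the Grothendieck group `K₀(A, E, s)`. -/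
def K0Rels : Set (FreeAbelianGroup C) :=
  {x | ∃ (A B X : C) (f : A ⟶ B) (g : B ⟶ X) (δ : S.Ext X A), S.IsExtriangle f g δ ∧
      x = FreeAbelianGroup.of A + FreeAbelianGroup.of X - FreeAbelianGroup.of B} ∪
  {x | ∃ (X Y : C) (_ : X ≅ Y), x = FreeAbelianGroup.of X - FreeAbelianGroup.of Y}

/-- `[M] = [M']` in the Grothendieck group `K₀(A, E, s)`, the quotient of the free
abelian group on (isomorphism classes of) objects by the extriangle relations. -/
def GrpRel (M M' : C) : Prop :=
  FreeAbelianGroup.of M - FreeAbelianGroup.of M' ∈ AddSubgroup.closure S.K0Rels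

end PreExt

/-- The congruence defining the Grothendieck monoid: `MonRel S M M'` holds if and only
if `[M] = [M']` in the Grothendieck monoid `M(A, E, s)`, the quotient of the monoid of
isomorphism classes of objects (under `⊞`) by the congruence generated by
`[B] ∼ [A] + [X]` for each extriangle `A → B → X ⇢`. -/
inductive MonRel {C : Type u} [Category.{v} C] [Preadditive C] [HasZeroObject C]
    [HasFiniteBiproducts C] (S : PreExt C) : C → C → Prop
  | of {A B X : C} {f : A ⟶ B} {g : B ⟶ X} {δ : S.Ext X A}
      (h : S.IsExtriangle f g δ) : MonRel S B (A ⊞ X)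
  | iso {X Y : C} (e : X ≅ Y) : MonRel S X Y
  | symm {X Y : C} : MonRel S X Y → MonRel S Y X
  | trans {X Y Z : C} : MonRel S X Y → MonRel S Y Z → MonRel S X Z
  | add {X Y : C} (Z : C) : MonRel S X Y → MonRel S (X ⊞ Z) (Y ⊞ Z)

/-- `[M]` is an atom of the Grothendieck monoid `M(A, E, s)`. -/
def IsAtomClass {C : Type u} [Category.{v} C] [Preadditive C] [HasZeroObject C]
    [HasFiniteBiproducts C] (S : PreExt C) (M : C) : Prop :=
  ¬ MonRel S M 0 ∧ ∀ X Y : C, MonRel S M (X ⊞ Y) → MonRel S X 0 ∨ MonRel S Y 0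

/-- An additive category is weakly idempotent complete if every retraction admits a kernel. -/
def WeaklyIdemComplete (C : Type u) [Category.{v} C] [Preadditive C] : Prop :=
  ∀ (X Y : C) (r : X ⟶ Y), IsSplitEpi r → HasKernel r

/-- A set of objects is closed under direct summands. -/
def ClosedSummands {C : Type u} [Category.{v} C] [Preadditive C] [HasZeroObject C]
    [HasFiniteBiproducts C] (P : Set C) : Prop :=
  ∀ (X Y Z : C), Z ∈ P → Nonempty (Z ≅ X ⊞ Y) → X ∈ P

/-- A Krull–Schmidt category: every object is a finite biproduct of objects having
local endomorphism rings. -/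
def KrullSchmidtCat (C : Type u) [Category.{v} C] [Preadditive C] [HasZeroObject C]
    [HasFiniteBiproducts C] : Prop :=
  ∀ X : C, ∃ (n : ℕ) (Y : Fin n → C),
    (∀ i, IsLocalRing (End (Y i))) ∧ Nonempty (X ≅ ⨁ Y)

/-- The closure `add Ψ` of a set of objects under finite direct sums and isomorphisms. -/
def addSet {C : Type u} [Category.{v} C] [Preadditive C] [HasZeroObject C]
    [HasFiniteBiproducts C] (P : Set C) : Set C :=
  {X | ∃ (m : ℕ) (f : Fin m → C), (∀ k, f k ∈ P) ∧ Nonempty (X ≅ ⨁ f)}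

/-- An indecomposable object. -/
def Indec {C : Type u} [Category.{v} C] [Preadditive C] [HasZeroObject C]
    [HasFiniteBiproducts C] (X : C) : Prop :=
  ¬ IsZero X ∧ ∀ (Y Z : C), Nonempty (X ≅ Y ⊞ Z) → IsZero Y ∨ IsZero Z

/-- A morphism `q` is right minimal. -/
def RightMinimal {C : Type u} [Category.{v} C] {X Y : C} (q : X ⟶ Y) : Prop :=
  ∀ g : X ⟶ X, g ≫ q = q → IsIso g

/-- The extra structure making an extriangulated category into an artin `R`-linear
extriangulated category: an `R`-module structure on each `E(X, A)` for which `E` is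
`R`-bilinear, with all Hom-sets and all `E(X, A)` of finite length over `R`. -/
structure ArtinLinear {C : Type u} [Category.{v} C] [Preadditive C]
    (R : Type*) [CommRing R] [CategoryTheory.Linear R C] (S : PreExt C) where
  module : ∀ X A : C, Module R (S.Ext X A)
  push_smul : ∀ {X A A' : C} (r : R) (a : A ⟶ A') (δ : S.Ext X A),
      S.push (r • a) δ = letI := module X A'; r • S.push a δ
  pull_smul : ∀ {X' X A : C} (r : R) (c : X' ⟶ X) (δ : S.Ext X A),
      S.pull (r • c) δ = letI := module X' A; r • S.pull c δ
  homFinite : ∀ X Y : C, IsFiniteLength R (X ⟶ Y)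
  extFinite : ∀ X A : C, letI := module X A; IsFiniteLength R (S.Ext X A)

/-- An `E`-stratifying system: a finite family of indecomposable objects subject to
the orthogonality axioms (S1) and (S2). -/
structure IsStratSys {C : Type u} [Category.{v} C] [Preadditive C] [HasZeroObject C]
    [HasFiniteBiproducts C] (S : PreExt C) {n : ℕ} (Φ : Fin n → C) : Prop where
  indec : ∀ i, Indec (Φ i)
  s1 : ∀ i j : Fin n, i < j → ∀ φ : Φ j ⟶ Φ i, φ = 0
  s2 : ∀ i j : Fin n, i ≤ j → ∀ δ : S.Ext (Φ j) (Φ i), δ = 0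

/-- The data of extriangles `K i → Q i → Φ i ⇢η i` with `K i ∈ F(Φ_{j>i})`, as in
axiom (PS2) of a projective `E`-stratifying system. -/
structure ProjData {C : Type u} [Category.{v} C] [Preadditive C]
    (S : PreExt C) {n : ℕ} (Φ Q : Fin n → C) where
  K : Fin n → C
  k : ∀ i, K i ⟶ Q i
  q : ∀ i, Q i ⟶ Φ i
  η : ∀ i, S.Ext (Φ i) (K i)
  ext : ∀ i, S.IsExtriangle (k i) (q i) (η i)
  kmem : ∀ i, K i ∈ S.Filt (Φ '' {j | i < j})

/-- `(Φ, Q)` is a projective `E`-stratifying system. -/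
def IsProjSS {C : Type u} [Category.{v} C] [Preadditive C] [HasZeroObject C]
    [HasFiniteBiproducts C] (S : PreExt C) {n : ℕ} (Φ Q : Fin n → C) : Prop :=
  IsStratSys S Φ ∧ (∀ i j : Fin n, ∀ δ : S.Ext (Q i) (Φ j), δ = 0) ∧
    Nonempty (ProjData S Φ Q)

/-- `(Φ, Q)` is a minimal projective `E`-stratifying system: the morphisms `q i` of
the extriangles witnessing (PS2) may be chosen right minimal. -/
def IsMinProjSS {C : Type u} [Category.{v} C] [Preadditive C] [HasZeroObject C]
    [HasFiniteBiproducts C] (S : PreExt C) {n : ℕ} (Φ Q : Fin n → C) : Prop :=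
  IsStratSys S Φ ∧ (∀ i j : Fin n, ∀ δ : S.Ext (Q i) (Φ j), δ = 0) ∧
    ∃ d : ProjData S Φ Q, ∀ i, RightMinimal (d.q i)

/-!
Induction on `k`. Suppose `A → B → X ⇢` has `A ∈ F(Φ)` and `E(B, Φ_j) = 0` for `j < k`.
Since `E(B, Φ_k)` has finite length over `R`, finitely many extensions generate it, and they
assemble into one universal extension `Φ_k^m → B' → B ⇢` through which every extension of `B`
by `Φ_k` factors; hence `E(B', Φ_k) = 0`, while (S2) gives `E(Φ_k^m, Φ_j) = 0` for `j ≤ k`, so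
the earlier vanishing survives. (ET4)ᵒᵖ composes the two into `A' → B' → X ⇢` with `A'` an
extension of `A` by `Φ_k^m`, still in `F(Φ)`. At `k = n`, vanishing against every `Φ_j`
extends to `F(Φ)` by the long exact sequence, so `B ∈ P(Φ)`; when `X ∈ F(Φ)`, extension
closure puts `B` in `F(Φ)` as well.
-/

namespace PreExt

variable {C : Type u} [Category.{v} C] [Preadditive C] (S : PreExt C)

@[simp] lemma push_id {X A : C} (δ : S.Ext X A) : S.push (𝟙 A) δ = δ := by
  simp [push]

@[simp] lemma pull_id {X A : C} (δ : S.Ext X A) : S.pull (𝟙 X) δ = δ := by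
  simp [pull]

lemma push_comp {X A A' A'' : C} (a : A ⟶ A') (b : A' ⟶ A'') (δ : S.Ext X A) :
    S.push (a ≫ b) δ = S.push b (S.push a δ) := by
  simp [push]

lemma pull_comp {X'' X' X A : C} (c : X'' ⟶ X') (d : X' ⟶ X) (δ : S.Ext X A) :
    S.pull (c ≫ d) δ = S.pull c (S.pull d δ) := by
  simp only [pull, op_comp, Functor.map_comp, NatTrans.comp_app]
  exact CategoryTheory.comp_apply _ _ _

lemma push_pull {X' X A A' : C} (a : A ⟶ A') (c : X' ⟶ X) (δ : S.Ext X A) :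
    S.push a (S.pull c δ) = S.pull c (S.push a δ) := by
  have h := congrArg (fun φ => φ δ) ((S.E.map c.op).naturality a)
  simp only [CategoryTheory.comp_apply] at h
  exact h.symm

@[simp] lemma push_zero {X A A' : C} (a : A ⟶ A') : S.push a (0 : S.Ext X A) = 0 :=
  map_zero _

@[simp] lemma pull_zero {X' X A : C} (c : X' ⟶ X) : S.pull c (0 : S.Ext X A) = 0 :=
  map_zero _

lemma push_add {X A A' : C} (a : A ⟶ A') (δ ε : S.Ext X A) :
    S.push a (δ + ε) = S.push a δ + S.push a ε :=
  map_add _ δ ε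

lemma isExtriangle_eqToHom {A A' B B' X X' : C} (hA : A = A') (hB : B = B')
    (hX : X = X') {f : A ⟶ B} {g : B ⟶ X} {δ : S.Ext X A} (h : S.IsExtriangle f g δ) :
    S.IsExtriangle (eqToHom hA.symm ≫ f ≫ eqToHom hB) (eqToHom hB.symm ≫ g ≫ eqToHom hX)
      (cast (by rw [hA, hX]) δ) := by
  subst hA hB hX
  simpa using h

variable {S} in
def FChain.snoc {t : ℕ} (c : S.FChain t) {B X : C} {f : c.obj (Fin.last t) ⟶ B}
    {g : B ⟶ X} {δ : S.Ext X (c.obj (Fin.last t))} (h : S.IsExtriangle f g δ) :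
    S.FChain (t + 1) where
  obj := Fin.snoc c.obj B
  factor := Fin.snoc c.factor X
  f := Fin.lastCases (motive := fun i =>
      Fin.snoc (α := fun _ => C) c.obj B i.castSucc ⟶ Fin.snoc (α := fun _ => C) c.obj B i.succ)
    (eqToHom (by simp) ≫ f ≫ eqToHom (by simp))
    (fun j => eqToHom (by simp) ≫ c.f j ≫ eqToHom (by rw [Fin.succ_castSucc, Fin.snoc_castSucc]))
  g := Fin.lastCases (motive := fun i =>
      Fin.snoc (α := fun _ => C) c.obj B i.succ ⟶ Fin.snoc (α := fun _ => C) c.factor X i)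
    (eqToHom (by simp) ≫ g ≫ eqToHom (by simp))
    (fun j => eqToHom (by rw [Fin.succ_castSucc, Fin.snoc_castSucc]) ≫ c.g j ≫ eqToHom (by simp))
  δ := Fin.lastCases (motive := fun i =>
      S.Ext (Fin.snoc (α := fun _ => C) c.factor X i)
        (Fin.snoc (α := fun _ => C) c.obj B i.castSucc))
    (cast (by simp) δ) (fun j => cast (by simp) (c.δ j))
  ext := Fin.lastCases (by simpa using S.isExtriangle_eqToHom (by simp) (by simp) (by simp) h)
    (fun j => by
      simpa using S.isExtriangle_eqToHom (by simp)
        (by rw [Fin.succ_castSucc, Fin.snoc_castSucc]) (by simp) (c.ext j))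

/-- `Filt P` without the bookkeeping of explicit chains. -/
inductive Filtered (P : Set C) : C → Prop
  | zero {Z : C} (h : IsZero Z) : Filtered P Z
  | step {A B X : C} (f : A ⟶ B) (g : B ⟶ X) (δ : S.Ext X A) (hA : Filtered P A)
      (hX : X ∈ P) (h : S.IsExtriangle f g δ) : Filtered P B

variable {S}

lemma mem_filt_iff_filtered {P : Set C} {M : C} : M ∈ S.Filt P ↔ Filtered S P M := by
  constructor
  · rintro ⟨t, c, h0, rfl, hP⟩
    suffices ∀ i, Filtered S P (c.obj i) from this (Fin.last t)
    intro i
    induction i using Fin.induction with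
    | zero => exact .zero h0
    | succ i ih => exact .step (c.f i) (c.g i) (c.δ i) ih (hP i) (c.ext i)
  · intro hM
    induction hM with
    | @zero Z hZ =>
      exact ⟨0, ⟨fun _ => Z, Fin.elim0, fun i => i.elim0, fun i => i.elim0, fun i => i.elim0,
        fun i => i.elim0⟩, hZ, rfl, fun i => i.elim0⟩
    | step f g δ _ hX h ih =>
      obtain ⟨t, c, h0, rfl, hP⟩ := ih
      refine ⟨t + 1, c.snoc h, by simpa [FChain.snoc] using h0, by simp [FChain.snoc], ?_⟩
      exact Fin.lastCases (by simpa [FChain.snoc] using hX)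
        (fun j => by simpa [FChain.snoc] using hP j)

variable [HasFiniteBiproducts C]

lemma zero_push (hS : S.IsET) {X A A' : C} (δ : S.Ext X A) : S.push (0 : A ⟶ A') δ = 0 := by
  simpa using hS.push_add (0 : A ⟶ A') 0 δ

lemma zero_pull (hS : S.IsET) {X' X A : C} (δ : S.Ext X A) : S.pull (0 : X' ⟶ X) δ = 0 := by
  simpa using hS.pull_add (0 : X' ⟶ X) 0 δ

lemma ext_eq_zero_of_isZero_left (hS : S.IsET) {X A : C} (h : IsZero X) (δ : S.Ext X A) :
    δ = 0 := by
  rw [← S.pull_id δ, h.eq_of_src (𝟙 X) 0, zero_pull hS]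

lemma ext_eq_zero_of_isZero_right (hS : S.IsET) {X A : C} (h : IsZero A) (δ : S.Ext X A) :
    δ = 0 := by
  rw [← S.push_id δ, h.eq_of_src (𝟙 A) 0, zero_push hS]

lemma pull_deflation_eq_zero (hS : S.IsET) {A B X : C} {f : A ⟶ B} {g : B ⟶ X}
    {δ : S.Ext X A} (h : S.IsExtriangle f g δ) : S.pull g δ = 0 := by
  obtain ⟨a, -, ha⟩ := hS.et3op (hS.realize_zero A B) h biprod.snd g rfl
  rw [← ha, push_zero]

lemma exists_iso_biprod_of_isExtriangle_zero (hS : S.IsET) {A B X : C} {f : A ⟶ B}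
    {g : B ⟶ X} (h : S.IsExtriangle f g (0 : S.Ext X A)) :
    ∃ j : B ≅ A ⊞ X, f ≫ j.hom = biprod.inl ∧ j.hom ≫ biprod.snd = g :=
  hS.realize_unique h (hS.realize_zero A X)

/- The two halves of the long exact sequences: realising `ε` and applying (ET4)ᵒᵖ, resp.
(ET4), produces an extriangle with extension `f^* ε = 0`, resp. `g_* ε = 0`; its
splitting supplies the preimage. -/
lemma exists_pull_eq_of_pull_eq_zero (hS : S.IsET) {A B X Y : C} {f : A ⟶ B} {g : B ⟶ X}
    {δ : S.Ext X A} (h : S.IsExtriangle f g δ) (ε : S.Ext B Y) (hε : S.pull f ε = 0) :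
    ∃ ε' : S.Ext X Y, S.pull g ε' = ε := by
  obtain ⟨_, _, _, hM⟩ := hS.realize_exists ε
  obtain ⟨E₀, _, _, e, θ, -, hsplit, -, hθ, -, -⟩ := hS.et4op h hM
  rw [hε] at hsplit
  obtain ⟨j, hj, -⟩ := exists_iso_biprod_of_isExtriangle_zero hS hsplit
  refine ⟨S.push (j.hom ≫ biprod.fst) θ, ?_⟩
  rw [← push_pull, hθ, ← S.push_comp, ← Category.assoc, hj, biprod.inl_fst, S.push_id]

lemma exists_push_eq_of_push_eq_zero (hS : S.IsET) {A B X Y : C} {f : A ⟶ B} {g : B ⟶ X}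
    {δ : S.Ext X A} (h : S.IsExtriangle f g δ) (ε : S.Ext Y B) (hε : S.push g ε = 0) :
    ∃ ε' : S.Ext Y A, S.push f ε' = ε := by
  obtain ⟨_, _, _, hM⟩ := hS.realize_exists ε
  obtain ⟨E₀, _, _, e, θ, -, hsplit, -, hθ, -, -⟩ := hS.et4 h hM
  rw [hε] at hsplit
  obtain ⟨j, -, hj⟩ := exists_iso_biprod_of_isExtriangle_zero hS hsplit
  refine ⟨S.pull (biprod.inr ≫ j.inv) θ, ?_⟩
  have hsection : (biprod.inr ≫ j.inv) ≫ e = 𝟙 Y := by simp [← hj]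
  rw [push_pull, hθ, ← S.pull_comp, hsection, S.pull_id]

lemma extFrom_eq_zero_of_isExtriangle (hS : S.IsET) {A B X Y : C} {f : A ⟶ B} {g : B ⟶ X}
    {δ : S.Ext X A} (h : S.IsExtriangle f g δ) (hA : ∀ ε : S.Ext A Y, ε = 0)
    (hX : ∀ ε : S.Ext X Y, ε = 0) (ε : S.Ext B Y) : ε = 0 := by
  obtain ⟨ε', rfl⟩ := exists_pull_eq_of_pull_eq_zero hS h ε (hA _)
  rw [hX ε', pull_zero]

lemma extTo_eq_zero_of_isExtriangle (hS : S.IsET) {A B X Y : C} {f : A ⟶ B} {g : B ⟶ X}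
    {δ : S.Ext X A} (h : S.IsExtriangle f g δ) (hA : ∀ ε : S.Ext Y A, ε = 0)
    (hX : ∀ ε : S.Ext Y X, ε = 0) (ε : S.Ext Y B) : ε = 0 := by
  obtain ⟨ε', rfl⟩ := exists_push_eq_of_push_eq_zero hS h ε (hX _)
  rw [hA ε', push_zero]

namespace Filtered

variable {P : Set C}

lemma of_iso (hS : S.IsET) {M M' : C} (hM : Filtered S P M) (e : M ≅ M') :
    Filtered S P M' := by
  induction hM with
  | zero hz => exact .zero (hz.of_iso e.symm)
  | step f g δ hA hX h => exact .step (f ≫ e.hom) (e.inv ≫ g) δ hA hX (hS.realize_iso e h)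

/- Extension closure, by induction on the filtration of the third term: (ET4)ᵒᵖ peels off
its top factor. -/
lemma of_isExtriangle (hS : S.IsET) {U B V : C} (hV : Filtered S P V) {f : U ⟶ B}
    {g : B ⟶ V} {δ : S.Ext V U} (h : S.IsExtriangle f g δ) (hU : Filtered S P U) :
    Filtered S P B := by
  induction hV generalizing U B with
  | @zero Z hZ =>
    rw [ext_eq_zero_of_isZero_left hS hZ δ] at h
    obtain ⟨j, -, -⟩ := exists_iso_biprod_of_isExtriangle_zero hS h
    exact hU.of_iso hS (isoBiprodZero hZ ≪≫ j.symm)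
  | step v w θ _ hZ hV ih =>
    obtain ⟨E₀, f', _, _, θ', hx, he, -, -, -, -⟩ := hS.et4op hV h
    exact .step f' (g ≫ w) θ' (ih he hU) hZ hx

lemma extTo_eq_zero (hS : S.IsET) {M Y : C} (hM : Filtered S P M)
    (hY : ∀ X ∈ P, ∀ ε : S.Ext Y X, ε = 0) (ε : S.Ext Y M) : ε = 0 := by
  induction hM with
  | zero hZ => exact ext_eq_zero_of_isZero_right hS hZ ε
  | step f g δ _ hX h ih => exact extTo_eq_zero_of_isExtriangle hS h ih (hY _ hX) ε

end Filtered

variable [HasZeroObject C]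

noncomputable def powObj (W : C) : ℕ → C
  | 0 => 0
  | m + 1 => powObj W m ⊞ W

noncomputable def powDesc {W W' : C} : ∀ {m : ℕ}, (Fin m → (W ⟶ W')) → (powObj W m ⟶ W')
  | 0, _ => 0
  | m + 1, a => biprod.desc (powDesc (a ∘ Fin.castSucc)) (a (Fin.last m))

variable (S) in
noncomputable def powExt {X W : C} : ∀ {m : ℕ}, (Fin m → S.Ext X W) → S.Ext X (powObj W m)
  | 0, _ => 0
  | m + 1, v => S.push biprod.inl (powExt (v ∘ Fin.castSucc)) + S.push biprod.inr (v (Fin.last m))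

lemma push_powDesc_powExt {X W W' : C} :
    ∀ {m : ℕ} (a : Fin m → (W ⟶ W')) (v : Fin m → S.Ext X W),
      S.push (powDesc a) (S.powExt v) = ∑ i, S.push (a i) (v i)
  | 0, _, _ => by simp [powExt]
  | m + 1, a, v => by
    rw [powExt, powDesc]
    refine (S.push_add (A := powObj W m ⊞ W) _ _ _).trans ?_
    rw [← S.push_comp, ← S.push_comp, biprod.inl_desc,
      biprod.inr_desc, push_powDesc_powExt, Fin.sum_univ_castSucc]
    rfl

lemma filtered_powObj (hS : S.IsET) {P : Set C} {W : C} (hW : W ∈ P) :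
    ∀ m, Filtered S P (powObj W m)
  | 0 => .zero (isZero_zero C)
  | m + 1 => .step _ _ _ (filtered_powObj hS hW m) hW (hS.realize_zero _ W)

lemma extFrom_powObj_eq_zero (hS : S.IsET) {W Y : C} (hW : ∀ ε : S.Ext W Y, ε = 0) :
    ∀ m (ε : S.Ext (powObj W m) Y), ε = 0
  | 0 => ext_eq_zero_of_isZero_left hS (isZero_zero C)
  | m + 1 => extFrom_eq_zero_of_isExtriangle hS (hS.realize_zero _ W)
      (extFrom_powObj_eq_zero hS hW m) hW

/- `ζ` is `powExt` of a finite generating family `v` of the finite length `R`-module `E(X, W)`;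
`ε = ∑ r i • v i` is its pushforward along `powDesc (r i • 𝟙 W)`. -/
lemma exists_ext_powObj_universal {R : Type*} [CommRing R] [Linear R C] (art : ArtinLinear R S)
    (X W : C) : ∃ (m : ℕ) (ζ : S.Ext X (powObj W m)),
      ∀ ε : S.Ext X W, ∃ a : powObj W m ⟶ W, S.push a ζ = ε := by
  let := art.module X W
  have : IsNoetherian R (S.Ext X W) :=
    (isFiniteLength_iff_isNoetherian_isArtinian.mp (art.extFinite X W)).1
  obtain ⟨m, v, hv⟩ := Module.Finite.exists_fin (R := R) (M := S.Ext X W)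
  refine ⟨m, S.powExt v, fun ε => ?_⟩
  have hε : ε ∈ Submodule.span R (Set.range v) := hv ▸ Submodule.mem_top
  obtain ⟨r, rfl⟩ := (Submodule.mem_span_range_iff_exists_fun R).mp hε
  refine ⟨powDesc fun i => r i • 𝟙 W, ?_⟩
  simp only [push_powDesc_powExt, art.push_smul, push_id]

lemma exists_isExtriangle_extFrom_eq_zero_of_isExtriangle (hS : S.IsET) {R : Type*}
    [CommRing R] [Linear R C] (art : ArtinLinear R S) {P : Set C} {W A' B' X : C} (hWP : W ∈ P)
    (hW : ∀ ε : S.Ext W W, ε = 0) {f' : A' ⟶ B'} {g' : B' ⟶ X} {η' : S.Ext X A'}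
    (h' : S.IsExtriangle f' g' η') (hA' : Filtered S P A') :
    ∃ (A B : C) (f : A ⟶ B) (g : B ⟶ X) (η : S.Ext X A), S.IsExtriangle f g η ∧
      Filtered S P A ∧ (∀ ε : S.Ext B W, ε = 0) ∧
      ∀ Y, (∀ ε : S.Ext W Y, ε = 0) → (∀ ε : S.Ext B' Y, ε = 0) → ∀ ε : S.Ext B Y, ε = 0 := by
  obtain ⟨m, ζ, hζ⟩ := exists_ext_powObj_universal art B' W
  obtain ⟨B, e, p, hζB⟩ := hS.realize_exists ζ
  obtain ⟨A, f, _, _, η, h, hA, -, -, -, -⟩ := hS.et4op h' hζB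
  refine ⟨A, B, f, p ≫ g', η, h, hA'.of_isExtriangle hS hA (filtered_powObj hS hWP m),
    fun ε => ?_, fun Y hY hB' => extFrom_eq_zero_of_isExtriangle hS hζB
      (extFrom_powObj_eq_zero hS hY m) hB'⟩
  obtain ⟨ε', rfl⟩ := exists_pull_eq_of_pull_eq_zero hS hζB ε (extFrom_powObj_eq_zero hS hW m _)
  obtain ⟨a, rfl⟩ := hζ ε'
  rw [← push_pull, pull_deflation_eq_zero hS hζB, push_zero]

lemma exists_isExtriangle_extFrom_eq_zero_of_lt (hS : S.IsET) {R : Type*} [CommRing R]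
    [Linear R C] (art : ArtinLinear R S) {n : ℕ} {Φ : Fin n → C}
    (hΦ : ∀ i j : Fin n, i ≤ j → ∀ δ : S.Ext (Φ j) (Φ i), δ = 0) (X : C) :
    ∀ k ≤ n, ∃ (A B : C) (f : A ⟶ B) (g : B ⟶ X) (η : S.Ext X A), S.IsExtriangle f g η ∧
      Filtered S (Set.range Φ) A ∧ ∀ j : Fin n, (j : ℕ) < k → ∀ ε : S.Ext B (Φ j), ε = 0
  | 0, _ => ⟨0, 0 ⊞ X, biprod.inl, biprod.snd, 0, hS.realize_zero 0 X, .zero (isZero_zero C),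
      fun _ hj => absurd hj (Nat.not_lt_zero _)⟩
  | k + 1, hk => by
    obtain ⟨A', B', f', g', η', h', hA', hB'⟩ :=
      exists_isExtriangle_extFrom_eq_zero_of_lt hS art hΦ X k (by omega)
    obtain ⟨A, B, f, g, η, h, hA, hBk, hB⟩ :=
      exists_isExtriangle_extFrom_eq_zero_of_isExtriangle hS art (Set.mem_range_self ⟨k, hk⟩)
        (hΦ _ _ le_rfl) h' hA'
    refine ⟨A, B, f, g, η, h, hA, fun j hj => ?_⟩
    rcases Nat.lt_succ_iff_lt_or_eq.mp hj with hjk | hjk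
    · exact hB _ (hΦ j ⟨k, hk⟩ (Fin.le_def.mpr hjk.le)) (hB' j hjk)
    · obtain rfl : j = ⟨k, hk⟩ := Fin.ext hjk
      exact hBk

lemma exists_isExtriangle_filtered_mem_projSet (hS : S.IsET) {R : Type*} [CommRing R]
    [Linear R C] (art : ArtinLinear R S) {n : ℕ} {Φ : Fin n → C}
    (hΦ : ∀ i j : Fin n, i ≤ j → ∀ δ : S.Ext (Φ j) (Φ i), δ = 0) (X : C) :
    ∃ (A B : C) (f : A ⟶ B) (g : B ⟶ X) (η : S.Ext X A), S.IsExtriangle f g η ∧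
      Filtered S (Set.range Φ) A ∧ B ∈ S.projSet (Set.range Φ) := by
  obtain ⟨A, B, f, g, η, h, hA, hB⟩ :=
    exists_isExtriangle_extFrom_eq_zero_of_lt hS art hΦ X n le_rfl
  refine ⟨A, B, f, g, η, h, hA, fun Y hY => ?_⟩
  refine (mem_filt_iff_filtered.mp hY).extTo_eq_zero hS ?_
  rintro _ ⟨j, rfl⟩
  exact hB j j.isLt

end PreExt

section Statements

variable {C : Type u} [Category.{v} C] [Preadditive C] [HasZeroObject C] [HasFiniteBiproducts C]

variable (R : Type*) [CommRing R] [IsArtinianRing R] [CategoryTheory.Linear R C]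
  [IsIdempotentComplete C]

theorem stmt14 (S : PreExt C) (hS : S.IsET) (art : ArtinLinear R S)
    {n : ℕ} (Φ : Fin n → C) (hΦ : IsStratSys S Φ) :
    (∀ X : C, ∃ (A B : C) (f : A ⟶ B) (g : B ⟶ X) (η : S.Ext X A),
      A ∈ S.Filt (Set.range Φ) ∧ B ∈ S.projSet (Set.range Φ) ∧ S.IsExtriangle f g η) ∧
    (∀ X ∈ S.Filt (Set.range Φ), ∃ (A B : C) (f : A ⟶ B) (g : B ⟶ X) (η : S.Ext X A),
      A ∈ S.Filt (Set.range Φ) ∧ B ∈ S.Filt (Set.range Φ) ∧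
      (∀ Y ∈ S.Filt (Set.range Φ), ∀ δ : S.Ext B Y, δ = 0) ∧ S.IsExtriangle f g η) := by
  refine ⟨fun X => ?_, fun X hX => ?_⟩ <;> obtain ⟨A, B, f, g, η, h, hA, hB⟩ :=
    PreExt.exists_isExtriangle_filtered_mem_projSet hS art hΦ.s2 X
  · exact ⟨A, B, f, g, η, PreExt.mem_filt_iff_filtered.mpr hA, hB, h⟩
  · have hB' := (PreExt.mem_filt_iff_filtered.mp hX).of_isExtriangle hS h hA
    exact ⟨A, B, f, g, η, PreExt.mem_filt_iff_filtered.mpr hA,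
      PreExt.mem_filt_iff_filtered.mpr hB', hB, h⟩

end Statements

end ExtriPaper
end

section
/- Let R be a commutative artinian ring, let (A, E, s) be an artin R-linear extriangulated category, and let (Φ, Q) = ({Φ_1, …, Φ_n}, {Q_1, …, Q_n}) be a projective E-stratifying system in (A, E, s). If i > j, then Hom_A(Q_i, Φ_j) = 0. -/
/-!
Common axiomatic framework: extriangulated categories in the sense of Nakaoka–Palu,
formalised as a biadditive functor `E` together with a realisation predicate
`IsExtriangle` subject to the axioms (ET1)–(ET4), (ET3)ᵒᵖ, (ET4)ᵒᵖ.
-/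

open CategoryTheory CategoryTheory.Limits ZeroObject

attribute [local instance] CategoryTheory.Limits.hasBinaryBiproducts_of_finite_biproducts

universe v u

namespace ExtriPaper

/-! A morphism `Q i ⟶ Φ j` with `j < i` vanishes on `K i`, because `K i` is filtered by the
`Φ l` with `l > i > j` and (S1) kills every map `Φ l ⟶ Φ j`. Hence it factors through the
deflation `Q i ⟶ Φ i`, and (S1) kills `Φ i ⟶ Φ j` as well. -/

namespace PreExt.IsET

variable {C : Type u} [Category.{v} C] [Preadditive C] [HasZeroObject C] [HasFiniteBiproducts C]
  {S : PreExt C}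

theorem coyoneda_exact₂ (hS : S.IsET) {A B X Y : C} {f : A ⟶ B} {g : B ⟶ X} {δ : S.Ext X A}
    (h : S.IsExtriangle f g δ) (φ : B ⟶ Y) (hφ : f ≫ φ = 0) : ∃ ψ : X ⟶ Y, g ≫ ψ = φ := by
  have hsplit : S.IsExtriangle (0 : (0 : C) ⟶ Y) (𝟙 Y) 0 := by
    simpa using hS.realize_iso (isoZeroBiprod (isZero_zero C)).symm (hS.realize_zero 0 Y)
  obtain ⟨ψ, hψ, -⟩ := hS.et3 h hsplit 0 φ (by rw [hφ, zero_comp])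
  exact ⟨ψ, by simpa using hψ⟩

theorem hom_eq_zero_of_extriangle (hS : S.IsET) {A B X Y : C} {f : A ⟶ B} {g : B ⟶ X}
    {δ : S.Ext X A} (h : S.IsExtriangle f g δ) (hA : ∀ α : A ⟶ Y, α = 0)
    (hX : ∀ ξ : X ⟶ Y, ξ = 0) (φ : B ⟶ Y) : φ = 0 := by
  obtain ⟨ψ, rfl⟩ := hS.coyoneda_exact₂ h φ (hA _)
  rw [hX ψ, comp_zero]

theorem hom_eq_zero_of_mem_filt (hS : S.IsET) {P : Set C} {Y : C}
    (hP : ∀ Z ∈ P, ∀ ζ : Z ⟶ Y, ζ = 0) {M : C} (hM : M ∈ S.Filt P) (φ : M ⟶ Y) : φ = 0 := by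
  obtain ⟨t, c, h0, rfl, hfac⟩ := hM
  suffices ∀ i : Fin (t + 1), ∀ φ : c.obj i ⟶ Y, φ = 0 from this _ φ
  intro i
  induction i using Fin.induction with
  | zero => exact fun φ => h0.eq_of_src φ 0
  | succ i ih => exact hS.hom_eq_zero_of_extriangle (c.ext i) ih (hP _ (hfac i))

end PreExt.IsET

section Statements

variable {C : Type u} [Category.{v} C] [Preadditive C] [HasZeroObject C] [HasFiniteBiproducts C]

variable (R : Type*) [CommRing R] [IsArtinianRing R] [CategoryTheory.Linear R C]
  [IsIdempotentComplete C]

theorem stmt16_general (S : PreExt C) (hS : S.IsET)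
    {n : ℕ} (Φ Q : Fin n → C) (hPQ : IsProjSS S Φ Q)
    (i j : Fin n) (hij : j < i) (φ : Q i ⟶ Φ j) : φ = 0 := by
  obtain ⟨hΦ, -, ⟨d⟩⟩ := hPQ
  have hK : ∀ κ : d.K i ⟶ Φ j, κ = 0 := by
    refine hS.hom_eq_zero_of_mem_filt ?_ (d.kmem i)
    rintro _ ⟨l, hil, rfl⟩
    exact hΦ.s1 j l (hij.trans hil)
  exact hS.hom_eq_zero_of_extriangle (d.ext i) hK (hΦ.s1 j i hij) φ

theorem stmt16 (S : PreExt C) (hS : S.IsET) (art : ArtinLinear R S)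
    {n : ℕ} (Φ Q : Fin n → C) (hPQ : IsProjSS S Φ Q)
    (i j : Fin n) (hij : j < i) (φ : Q i ⟶ Φ j) : φ = 0 :=
  stmt16_general S hS Φ Q hPQ i j hij φ

end Statements

end ExtriPaper
end
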